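/- arXiv:math/0612336 — 3 statements merged into one kernel-verified Lean document; each statement's English description precedes it below -/
import Mathlib

section
/- Let φ(Z,W) = Σ_J Z^J f_J(W) be an auxiliary theta function of level M with respect to Ω, and let K be a multi-index of maximal total degree |K| among those with f_K ≢ 0. Then f_K is a theta function of level M with respect to Ω, i.e., f_K(W+ξΩ+η) = exp{-πi·σ(M(ξΩᵗξ+2Wᵗξ))}f_K(W) for all ξ,η ∈ ℤ^{(h,g)}. -/
open Complex Matrix Filter Finset

noncomputable section

attribute [local instance] Matrix.normedAddCommGroup Matrix.normedSpace

abbrev Mat (h g : ℕ) := Matrix (Fin h) (Fin g) ℂ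
abbrev MatZ (h g : ℕ) := Matrix (Fin h) (Fin g) ℤ
abbrev Mat2 (h g : ℕ) := Mat h g × Mat h g
abbrev MIdx (h g : ℕ) := (Fin h × Fin g) → ℕ

/-- An integer matrix viewed as a complex matrix. -/
def intMat {h g : ℕ} (N : MatZ h g) : Mat h g := N.map (Int.cast : ℤ → ℂ)

/-- Ω belongs to the Siegel upper half plane: symmetric with positive definite imaginary part. -/
def IsSiegel {g : ℕ} (Ω : Matrix (Fin g) (Fin g) ℂ) : Prop :=
  Ω.IsSymm ∧ (Ω.map Complex.im).PosDef

/-- A positive definite, symmetric, even integral matrix. -/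
def IsEvenIntegral {h : ℕ} (M : Matrix (Fin h) (Fin h) ℤ) : Prop :=
  M.IsSymm ∧ (M.map (Int.cast : ℤ → ℝ)).PosDef ∧ ∀ k, Even (M k k)

/-- Membership in `M(h)`: positive definite symmetric even integral with no zero entry. -/
def IsLevel {h : ℕ} (M : Matrix (Fin h) (Fin h) ℤ) : Prop :=
  IsEvenIntegral M ∧ ∀ k l, M k l ≠ 0

/-- `A ∈ M⁻¹ ℤ^{(h,g)}`, i.e. `M·A` has integer entries. -/
def IsIntegralPt {h g : ℕ} (M : Matrix (Fin h) (Fin h) ℤ) (A : Mat h g) : Prop :=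
  ∀ k a, ∃ n : ℤ, ((M.map (Int.cast : ℤ → ℂ)) * A) k a = (n : ℂ)

/-- A complete system of representatives of `M⁻¹ℤ^{(h,g)}/ℤ^{(h,g)}`. -/
def IsRepSystem {h g : ℕ} {ι : Type*} (M : Matrix (Fin h) (Fin h) ℤ)
    (rep : ι → Mat h g) : Prop :=
  (∀ i, IsIntegralPt M (rep i)) ∧
  ∀ A : Mat h g, IsIntegralPt M A → ∃! i : ι, ∃ N : MatZ h g, A = rep i + intMat N

/-- The general term of the theta series of level `M`. -/
def thetaTerm {h g : ℕ} (M : Matrix (Fin h) (Fin h) ℤ) (Ω : Matrix (Fin g) (Fin g) ℂ)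
    (A W : Mat h g) (N : MatZ h g) : ℂ :=
  Complex.exp ((Real.pi : ℂ) * Complex.I *
    Matrix.trace ((M.map (Int.cast : ℤ → ℂ)) *
      ((intMat N + A) * Ω * (intMat N + A)ᵀ + (2 : ℂ) • (W * (intMat N + A)ᵀ))))

/-- The theta series `ϑ^{(M)}[A;0](Ω|W)`. -/
def theta {h g : ℕ} (M : Matrix (Fin h) (Fin h) ℤ) (Ω : Matrix (Fin g) (Fin g) ℂ)
    (A : Mat h g) (W : Mat h g) : ℂ :=
  ∑' N : MatZ h g, thetaTerm M Ω A W N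

/-- The automorphy factor `exp{-πi·σ(M(ξΩᵗξ + 2Wᵗξ))}`. -/
def autFactor {h g : ℕ} (M : Matrix (Fin h) (Fin h) ℤ) (Ω : Matrix (Fin g) (Fin g) ℂ)
    (ξ : MatZ h g) (W : Mat h g) : ℂ :=
  Complex.exp (-((Real.pi : ℂ) * Complex.I) *
    Matrix.trace ((M.map (Int.cast : ℤ → ℂ)) *
      (intMat ξ * Ω * (intMat ξ)ᵀ + (2 : ℂ) • (W * (intMat ξ)ᵀ))))

/-- Theta function of level `M` with respect to `Ω`: an entire function with the
transformation behaviour. -/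
def IsThetaFn {h g : ℕ} (M : Matrix (Fin h) (Fin h) ℤ) (Ω : Matrix (Fin g) (Fin g) ℂ)
    (f : Mat h g → ℂ) : Prop :=
  Differentiable ℂ f ∧ ∀ (W : Mat h g) (ξ η : MatZ h g),
    f (W + intMat ξ * Ω + intMat η) = autFactor M Ω ξ W * f W

/-- Auxiliary theta function of level `M` w.r.t. `Ω`: a polynomial in `Z` with entire
coefficients in `W`, with the transformation behaviour. -/
def IsAuxTheta {h g : ℕ} (M : Matrix (Fin h) (Fin h) ℤ) (Ω : Matrix (Fin g) (Fin g) ℂ)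
    (φ : Mat2 h g → ℂ) : Prop :=
  (∃ (S : Finset (MIdx h g)) (f : MIdx h g → Mat h g → ℂ),
      (∀ J ∈ S, Differentiable ℂ (f J)) ∧
      ∀ Z W : Mat h g, φ (Z, W) = ∑ J ∈ S, (∏ p : Fin h × Fin g, Z p.1 p.2 ^ J p) * f J W) ∧
  ∀ (Z W : Mat h g) (ξ η : MatZ h g),
    φ (Z + intMat ξ, W + intMat ξ * Ω + intMat η) = autFactor M Ω ξ W * φ (Z, W)

/-- The general term of the auxiliary theta series `ϑ̃^{(M)}_J[A;0](Ω|Z,W)`. -/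
def auxThetaTerm {h g : ℕ} (M : Matrix (Fin h) (Fin h) ℤ) (Ω : Matrix (Fin g) (Fin g) ℂ)
    (A : Mat h g) (J : MIdx h g) (Z W : Mat h g) (N : MatZ h g) : ℂ :=
  (2 * (Real.pi : ℂ) * Complex.I) ^ (∑ p : Fin h × Fin g, J p) *
    (∏ p : Fin h × Fin g,
      (∑ l : Fin h, (M p.1 l : ℂ) * (Z + intMat N + A) l p.2) ^ J p) *
    thetaTerm M Ω A W N

/-- The auxiliary theta series `ϑ̃^{(M)}_J[A;0](Ω|Z,W)`. -/
def auxTheta {h g : ℕ} (M : Matrix (Fin h) (Fin h) ℤ) (Ω : Matrix (Fin g) (Fin g) ℂ)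
    (A : Mat h g) (J : MIdx h g) (Z W : Mat h g) : ℂ :=
  ∑' N : MatZ h g, auxThetaTerm M Ω A J Z W N

/-- The partial derivative `∂/∂W_{ka}` of a function on `ℂ^{(h,g)}`. -/
def pd {h g : ℕ} (p : Fin h × Fin g) (f : Mat h g → ℂ) : Mat h g → ℂ :=
  fun W => fderiv ℂ f W (Matrix.single p.1 p.2 1)

/-- The iterated derivative `(∂/∂W)^J` of a function on `ℂ^{(h,g)}`. -/
def pdPow {h g : ℕ} (J : MIdx h g) (f : Mat h g → ℂ) : Mat h g → ℂ :=
  (((Finset.univ : Finset (Fin h × Fin g)).toList.map (fun p => (pd p)^[J p])).foldr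
    (· ∘ ·) id) f

/-- The partial derivative `∂/∂Z_{ka}` on functions of `(Z,W)`. -/
def pdZ {h g : ℕ} (p : Fin h × Fin g) (φ : Mat2 h g → ℂ) : Mat2 h g → ℂ :=
  fun x => fderiv ℂ φ x (Matrix.single p.1 p.2 1, 0)

/-- The partial derivative `∂/∂W_{ka}` on functions of `(Z,W)`. -/
def pdW {h g : ℕ} (p : Fin h × Fin g) (φ : Mat2 h g → ℂ) : Mat2 h g → ℂ :=
  fun x => fderiv ℂ φ x (0, Matrix.single p.1 p.2 1)

/-- The lowering operator `D_{ma} = (1/2πi)·∂/∂Z_{ma}`. -/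
def Dop {h g : ℕ} (p : Fin h × Fin g) (φ : Mat2 h g → ℂ) : Mat2 h g → ℂ :=
  fun x => (1 / (2 * (Real.pi : ℂ) * Complex.I)) * pdZ p φ x

/-- The raising operator `∂(M,Z,W)_{ka} = 2πi·Σ_l M_{kl}Z_{la} + ∂/∂W_{ka}`. -/
def delOp {h g : ℕ} (M : Matrix (Fin h) (Fin h) ℂ) (p : Fin h × Fin g)
    (φ : Mat2 h g → ℂ) : Mat2 h g → ℂ :=
  fun x => (2 * (Real.pi : ℂ) * Complex.I) * (∑ l : Fin h, M p.1 l * x.1 l p.2) * φ x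
    + pdW p φ x

/-- The iterated raising operator `∂(M,Z,W)^J = Δ^J`. -/
def delOpPow {h g : ℕ} (M : Matrix (Fin h) (Fin h) ℂ) (J : MIdx h g)
    (φ : Mat2 h g → ℂ) : Mat2 h g → ℂ :=
  (((Finset.univ : Finset (Fin h × Fin g)).toList.map (fun p => (delOp M p)^[J p])).foldr
    (· ∘ ·) id) φ
section auxcoeff

open MvPolynomial

variable {σ' : Type*} [Fintype σ'] [DecidableEq σ']

private lemma degXC (p : σ') (a : ℂ) : (X (R := ℂ) p + C a).totalDegree ≤ 1 := by
  refine le_trans (MvPolynomial.totalDegree_add _ _) ?_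
  simp [MvPolynomial.totalDegree_X, MvPolynomial.totalDegree_C]

private lemma pow_diff_deg (p : σ') (a : ℂ) : ∀ n : ℕ, 1 ≤ n →
    ((X (R := ℂ) p + C a) ^ n - X p ^ n).totalDegree < n := by
  intro n
  induction n with
  | zero => omega
  | succ n ih =>
    intro _
    by_cases hn : 1 ≤ n
    · have hD := ih hn
      have key : (X (R := ℂ) p + C a) ^ (n + 1) - X p ^ (n + 1)
          = (X p + C a) * ((X p + C a) ^ n - X p ^ n) + C a * X p ^ n := by ring
      rw [key]
      refine lt_of_le_of_lt (MvPolynomial.totalDegree_add _ _) ?_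
      rw [Nat.max_lt]
      constructor
      · refine lt_of_le_of_lt (MvPolynomial.totalDegree_mul _ _) ?_
        have := degXC p a
        omega
      · refine lt_of_le_of_lt (MvPolynomial.totalDegree_mul _ _) ?_
        have h1 : (C a : MvPolynomial σ' ℂ).totalDegree = 0 := MvPolynomial.totalDegree_C a
        have h2 : (X (R := ℂ) p ^ n : MvPolynomial σ' ℂ).totalDegree ≤ n := by
          have := MvPolynomial.totalDegree_pow (X (R := ℂ) p) n
          rwa [MvPolynomial.totalDegree_X, mul_one] at this
        omega
    · have hn0 : n = 0 := by omega
      subst hn0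
      have hkey : (X (R := ℂ) p + C a) ^ 1 - X p ^ 1 = C a := by ring
      rw [hkey, MvPolynomial.totalDegree_C]
      omega

private lemma prod_diff_deg (c : σ' → ℂ) (J : σ' → ℕ) (s : Finset σ') :
    (∏ p ∈ s, (X (R := ℂ) p + C (c p)) ^ (J p)) - (∏ p ∈ s, X (R := ℂ) p ^ (J p)) = 0 ∨
    ((∏ p ∈ s, (X (R := ℂ) p + C (c p)) ^ (J p))
        - (∏ p ∈ s, X (R := ℂ) p ^ (J p))).totalDegree < ∑ p ∈ s, J p := by
  classical
  induction s using Finset.induction_on with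
  | empty => left; simp
  | @insert a s ha ih =>
    rw [Finset.prod_insert ha, Finset.prod_insert ha, Finset.sum_insert ha]
    set A := (X (R := ℂ) a + C (c a)) ^ (J a) with hA
    set B := (X (R := ℂ) a) ^ (J a) with hB
    set P := ∏ p ∈ s, (X (R := ℂ) p + C (c p)) ^ (J p) with hPdef
    set Q := ∏ p ∈ s, (X (R := ℂ) p) ^ (J p) with hQdef
    have key : A * P - B * Q = B * (P - Q) + (A - B) * P := by ring
    have hBdeg : B.totalDegree = J a := MvPolynomial.totalDegree_X_pow a (J a)
    have hPdeg : P.totalDegree ≤ ∑ p ∈ s, J p := by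
      refine le_trans (MvPolynomial.totalDegree_finset_prod s _) (Finset.sum_le_sum ?_)
      intro p _
      refine le_trans (MvPolynomial.totalDegree_pow _ _) ?_
      have := degXC p (c p)
      calc J p * (X (R := ℂ) p + C (c p)).totalDegree ≤ J p * 1 := Nat.mul_le_mul_left _ this
        _ = J p := mul_one _
    by_cases hJa : J a = 0
    · have hAB : A = B := by rw [hA, hB, hJa, pow_zero, pow_zero]
      rcases ih with h0 | hlt
      · left; rw [key, h0, hAB]; ring
      · right
        rw [key, hAB, sub_self, zero_mul, add_zero]
        have h := MvPolynomial.totalDegree_mul B (P - Q)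
        rw [hBdeg] at h
        omega
    · right
      have h1 : 1 ≤ J a := Nat.one_le_iff_ne_zero.mpr hJa
      have hABdeg : (A - B).totalDegree < J a := pow_diff_deg a (c a) (J a) h1
      rw [key]
      refine lt_of_le_of_lt (MvPolynomial.totalDegree_add _ _) ?_
      rw [Nat.max_lt]
      constructor
      · rcases ih with h0 | hlt
        · rw [h0, mul_zero]
          simp only [MvPolynomial.totalDegree_zero]
          omega
        · have h := MvPolynomial.totalDegree_mul B (P - Q)
          rw [hBdeg] at h
          omega
      · have h := MvPolynomial.totalDegree_mul (A - B) P
        omega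

private lemma coeff_prod_X (J K : σ' → ℕ) :
    MvPolynomial.coeff (Finsupp.equivFunOnFinite.symm K)
      (∏ p, (X (R := ℂ) p) ^ (J p)) = if J = K then 1 else 0 := by
  classical
  have hmono : (monomial (Finsupp.equivFunOnFinite.symm J) (1 : ℂ) : MvPolynomial σ' ℂ)
      = ∏ p, (X (R := ℂ) p) ^ (J p) := by
    rw [MvPolynomial.monomial_eq, C_1, one_mul, Finsupp.prod_pow]
    exact Finset.prod_congr rfl fun p _ => by simp
  rw [← hmono, MvPolynomial.coeff_monomial]
  by_cases hJK : J = K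
  · simp [hJK]
  · rw [if_neg, if_neg hJK]
    exact fun hcon => hJK (Finsupp.equivFunOnFinite.symm.injective hcon)

private lemma coeff_prod_X_add_C (c : σ' → ℂ) (J K : σ' → ℕ)
    (hJK : ∑ p, J p ≤ ∑ p, K p) :
    MvPolynomial.coeff (Finsupp.equivFunOnFinite.symm K)
      (∏ p, (X (R := ℂ) p + C (c p)) ^ (J p)) = if J = K then 1 else 0 := by
  classical
  rcases prod_diff_deg c J Finset.univ with h0 | hlt
  · rw [sub_eq_zero] at h0
    rw [h0, coeff_prod_X]
  · have hsup : ∑ i ∈ (Finsupp.equivFunOnFinite.symm K).support,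
        (Finsupp.equivFunOnFinite.symm K) i = ∑ p, K p := by
      rw [Finset.sum_subset (Finset.subset_univ _)
        (fun x _ hx => Finsupp.notMem_support_iff.mp hx)]
      exact Finset.sum_congr rfl fun x _ => by simp
    have hz : MvPolynomial.coeff (Finsupp.equivFunOnFinite.symm K)
        ((∏ p, (X (R := ℂ) p + C (c p)) ^ (J p)) - ∏ p, (X (R := ℂ) p) ^ (J p)) = 0 :=
      MvPolynomial.coeff_eq_zero_of_totalDegree_lt (by rw [hsup]; omega)
    rw [MvPolynomial.coeff_sub, sub_eq_zero] at hz
    rw [hz, coeff_prod_X]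

end auxcoeff

/-- if `φ(Z,W) = Σ_J Z^J f_J(W)` is an auxiliary theta function of level `M`
and `K` has maximal total degree `|K|` among multi-indices with `f_K ≢ 0`, then `f_K` is a
theta function of level `M` with respect to `Ω`. -/
theorem top_coefficient_is_theta {h g : ℕ}
    (Ω : Matrix (Fin g) (Fin g) ℂ) (hΩ : IsSiegel Ω)
    (M : Matrix (Fin h) (Fin h) ℤ) (hM : IsEvenIntegral M)
    (φ : Mat2 h g → ℂ) (S : Finset (MIdx h g)) (f : MIdx h g → Mat h g → ℂ)
    (hf : ∀ J ∈ S, Differentiable ℂ (f J))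
    (hrep : ∀ Z W : Mat h g,
      φ (Z, W) = ∑ J ∈ S, (∏ p : Fin h × Fin g, Z p.1 p.2 ^ J p) * f J W)
    (hfun : ∀ (Z W : Mat h g) (ξ η : MatZ h g),
      φ (Z + intMat ξ, W + intMat ξ * Ω + intMat η) = autFactor M Ω ξ W * φ (Z, W))
    (K : MIdx h g) (hK : K ∈ S) (hfK : f K ≠ 0)
    (hmax : ∀ J ∈ S, f J ≠ 0 → (∑ p : Fin h × Fin g, J p) ≤ ∑ p : Fin h × Fin g, K p) :
    ∀ (W : Mat h g) (ξ η : MatZ h g),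
      f K (W + intMat ξ * Ω + intMat η) = autFactor M Ω ξ W * f K W := by
  intro W ξ η
  classical
  set W' := W + intMat ξ * Ω + intMat η with hW'
  set e : MIdx h g → ((Fin h × Fin g) →₀ ℕ) := fun J => Finsupp.equivFunOnFinite.symm J with he
  set P1 : MvPolynomial (Fin h × Fin g) ℂ :=
    ∑ J ∈ S, (∏ p : Fin h × Fin g,
      (MvPolynomial.X p + MvPolynomial.C (intMat ξ p.1 p.2)) ^ (J p)) *
      MvPolynomial.C (f J W') with hP1
  set P2 : MvPolynomial (Fin h × Fin g) ℂ :=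
    ∑ J ∈ S, (∏ p : Fin h × Fin g, (MvPolynomial.X p) ^ (J p)) *
      MvPolynomial.C (autFactor M Ω ξ W * f J W) with hP2
  have hPeq : P1 = P2 := by
    apply MvPolynomial.funext
    intro v
    set Z : Mat h g := Matrix.of (fun i j => v (i, j)) with hZ
    have e1 : MvPolynomial.eval v P1 = φ (Z + intMat ξ, W') := by
      rw [hrep, hP1]
      simp only [map_sum, _root_.map_mul, MvPolynomial.eval_prod, map_pow, map_add,
        MvPolynomial.eval_X, MvPolynomial.eval_C]
      have hzp : ∀ p : Fin h × Fin g, (Z + intMat ξ) p.1 p.2 = v p + intMat ξ p.1 p.2 := by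
        intro p; simp [hZ, Matrix.add_apply]
      simp only [hzp]
    have e2 : MvPolynomial.eval v P2 = autFactor M Ω ξ W * φ (Z, W) := by
      rw [hrep, hP2, Finset.mul_sum]
      simp only [map_sum, _root_.map_mul, MvPolynomial.eval_prod, map_pow,
        MvPolynomial.eval_X, MvPolynomial.eval_C]
      refine Finset.sum_congr rfl fun J _ => ?_
      have hzp : ∀ p : Fin h × Fin g, Z p.1 p.2 = v p := by
        intro p; simp [hZ]
      simp only [hzp]
      ring
    rw [e1, e2, hfun]
  have hcoeff := congrArg (MvPolynomial.coeff (e K)) hPeq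
  have hc1 : MvPolynomial.coeff (e K) P1 = f K W' := by
    rw [hP1, MvPolynomial.coeff_sum]
    rw [Finset.sum_eq_single_of_mem K hK]
    · rw [mul_comm, MvPolynomial.coeff_C_mul, he, coeff_prod_X_add_C _ K K le_rfl,
        if_pos rfl, mul_one]
    · intro J hJ hne
      rw [mul_comm, MvPolynomial.coeff_C_mul]
      by_cases hfJ : f J = 0
      · rw [hfJ]; simp
      · rw [he, coeff_prod_X_add_C _ J K (hmax J hJ hfJ), if_neg hne, mul_zero]
  have hc2 : MvPolynomial.coeff (e K) P2 = autFactor M Ω ξ W * f K W := by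
    rw [hP2, MvPolynomial.coeff_sum]
    rw [Finset.sum_eq_single_of_mem K hK]
    · rw [mul_comm, MvPolynomial.coeff_C_mul, he, coeff_prod_X, if_pos rfl, mul_one]
    · intro J hJ hne
      rw [mul_comm, MvPolynomial.coeff_C_mul, he, coeff_prod_X, if_neg hne, mul_zero]
  rw [hc1, hc2] at hcoeff
  exact hcoeff
end
end

section
/- The graded algebra T(Ω) of theta functions equals the subalgebra of the graded algebra A(Ω) of auxiliary theta functions consisting of all φ ∈ A(Ω) with D_{ma}φ = 0 for all 1 ≤ m ≤ h, 1 ≤ a ≤ g, where D_{ma} acts as (1/2πi)·∂/∂Z_{ma} on each graded piece. In other words, an auxiliary theta function is annihilated by all D_{ma} if and only if it does not depend on Z (it is a theta function in W). -/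
open Complex Matrix Filter Finset

noncomputable section

attribute [local instance] Matrix.normedAddCommGroup Matrix.normedSpace

/-- Auxiliary: a finite product of differentiable ℂ-valued functions is differentiable. -/
lemma differentiable_finset_prod' {E : Type*} [NormedAddCommGroup E] [NormedSpace ℂ E]
    {ι : Type*} (s : Finset ι) (f : ι → E → ℂ)
    (hf : ∀ i ∈ s, Differentiable ℂ (f i)) :
    Differentiable ℂ (fun x => ∏ i ∈ s, f i x) := by
  classical
  induction s using Finset.induction_on with
  | empty => simpa using differentiable_const (1 : ℂ)
  | insert a t hni ih =>
      simp only [Finset.prod_insert hni]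
      exact (hf a (Finset.mem_insert_self a t)).mul
        (ih fun i hi => hf i (Finset.mem_insert_of_mem hi))


/-- an auxiliary theta function of level `M ∈ M(h)` is annihilated by all
the operators `D_{ma}` if and only if it is independent of `Z` and is (as a function of
`W`) a theta function of level `M`. -/
theorem aux_killed_by_Dop_iff_theta {h g : ℕ}
    (Ω : Matrix (Fin g) (Fin g) ℂ) (hΩ : IsSiegel Ω)
    (M : Matrix (Fin h) (Fin h) ℤ) (hM : IsLevel M)
    (φ : Mat2 h g → ℂ) (hφ : IsAuxTheta M Ω φ) :
    (∀ p : Fin h × Fin g, Dop p φ = 0) ↔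
      ∃ f : Mat h g → ℂ, IsThetaFn M Ω f ∧ φ = fun x : Mat2 h g => f x.2 := by
  obtain ⟨⟨S, F, hFd, hrep⟩, htrans⟩ := hφ
  have hφd : Differentiable ℂ φ := by
    have hrw : φ = fun x : Mat2 h g =>
        ∑ J ∈ S, (∏ p : Fin h × Fin g, x.1 p.1 p.2 ^ J p) * F J x.2 := by
      funext x; exact hrep x.1 x.2
    rw [hrw]
    refine Differentiable.fun_sum fun J hJ => Differentiable.mul ?_ ?_
    · refine differentiable_finset_prod' _ _ fun p _ => ?_
      have he : Differentiable ℂ (fun x : Mat2 h g => x.1 p.1 p.2) :=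
        by fun_prop
      exact he.pow _
    · exact (hFd J hJ).comp differentiable_snd
  constructor
  · intro hD
    have hpdZ : ∀ (p : Fin h × Fin g) (x : Mat2 h g), pdZ p φ x = 0 := by
      intro p x
      have hx := congrFun (hD p) x
      simp only [Dop, Pi.zero_apply] at hx
      have h2 : (1 / (2 * (Real.pi : ℂ) * Complex.I)) ≠ 0 :=
        one_div_ne_zero (mul_ne_zero (mul_ne_zero two_ne_zero
          (Complex.ofReal_ne_zero.mpr Real.pi_ne_zero)) Complex.I_ne_zero)
      exact (mul_eq_zero.mp hx).resolve_left h2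
    have hconst : ∀ Z W : Mat h g, φ (Z, W) = φ (0, W) := by
      intro Z W
      have hg : Differentiable ℂ (fun Z : Mat h g => φ (Z, W)) :=
        hφd.comp (differentiable_id.prodMk (differentiable_const W))
      refine is_const_of_fderiv_eq_zero hg ?_ Z 0
      intro Z'
      have hF : HasFDerivAt (fun Z : Mat h g => φ (Z, W))
          ((fderiv ℂ φ (Z', W)).comp (ContinuousLinearMap.inl ℂ (Mat h g) (Mat h g))) Z' :=
        (hφd (Z', W)).hasFDerivAt.comp Z' (hasFDerivAt_prodMk_left Z' W)
      refine hF.fderiv.trans ?_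
      ext V
      simp only [ContinuousLinearMap.comp_apply, ContinuousLinearMap.inl_apply,
        ContinuousLinearMap.zero_apply]
      have hV1 : V = ∑ p : Fin h × Fin g,
          V p.1 p.2 • (Matrix.single p.1 p.2 1 : Mat h g) := by
        rw [Fintype.sum_prod_type]
        simp only [Matrix.smul_single, smul_eq_mul, mul_one]
        exact Matrix.matrix_eq_sum_single V
      have hV : ((V, (0 : Mat h g)) : Mat2 h g) = ∑ p : Fin h × Fin g,
          V p.1 p.2 • (((Matrix.single p.1 p.2 1 : Mat h g), (0 : Mat h g)) : Mat2 h g) := by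
        refine Prod.ext ?_ ?_
        · rw [Prod.fst_sum]; simpa using hV1
        · rw [Prod.snd_sum]; simp
      rw [hV, map_sum]
      refine Finset.sum_eq_zero fun p _ => ?_
      rw [_root_.map_smul]
      have hz := hpdZ p (Z', W)
      simp only [pdZ] at hz
      rw [hz, smul_zero]
    refine ⟨fun W => φ (0, W), ⟨?_, ?_⟩, ?_⟩
    · exact hφd.comp ((differentiable_const (0 : Mat h g)).prodMk differentiable_id)
    · intro W ξ η
      have ht := htrans (-(intMat ξ)) W ξ η
      rw [neg_add_cancel] at ht
      show φ (0, W + intMat ξ * Ω + intMat η) = autFactor M Ω ξ W * φ (0, W)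
      rw [ht, hconst (-(intMat ξ)) W]
    · funext x
      exact hconst x.1 x.2
  · rintro ⟨f, ⟨hfd, -⟩, rfl⟩
    intro p
    funext x
    simp only [Dop, Pi.zero_apply]
    have hF : HasFDerivAt (fun x : Mat2 h g => f x.2)
        ((fderiv ℂ f x.2).comp (ContinuousLinearMap.snd ℂ (Mat h g) (Mat h g))) x :=
      (hfd x.2).hasFDerivAt.comp x hasFDerivAt_snd
    have hz : pdZ p (fun x : Mat2 h g => f x.2) x = 0 := by
      simp only [pdZ]
      rw [hF.fderiv]
      simp
    rw [hz, mul_zero]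
end
end

section
/- Suppose φ_K ∈ T_M(Ω) for each multi-index K in a finite set, and Σ_K (∂/∂W)^K φ_K(W) = 0 identically on ℂ^{(h,g)}. Then φ_K = 0 for every K. Equivalently, the linear map sending a finite family (φ_K) of theta functions of level M to Σ_K (∂/∂W)^K φ_K is injective. -/
open Complex Matrix Filter Finset

noncomputable section

attribute [local instance] Matrix.normedAddCommGroup Matrix.normedSpace

open scoped ContDiff

section Hartogs
open Metric

variable {E F : Type} [NormedAddCommGroup E] [NormedSpace ℂ E] [FiniteDimensional ℂ E]
  [NormedAddCommGroup F] [NormedSpace ℂ F]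

theorem sliceDeriv {f : E → F} (hf : Differentiable ℂ f) (W V : E) :
    HasDerivAt (fun z : ℂ => f (W + z • V)) (fderiv ℂ f W V) 0 := by
  have h1 : HasDerivAt (fun z : ℂ => W + z • V) V 0 := by
    simpa using ((hasDerivAt_id (0 : ℂ)).smul_const V).const_add W
  have h2 := (hf (W + (0 : ℂ) • V)).hasFDerivAt.comp_hasDerivAt 0 h1
  simpa [Function.comp_def] using h2

theorem fderiv_norm_le_of_bound [CompleteSpace F] {f : E → F} (hf : Differentiable ℂ f) {X : E} {C : ℝ}
    (hC : ∀ Y ∈ closedBall X 2, ‖f Y‖ ≤ C) {V : E} (hV : ‖V‖ ≤ 1) :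
    ‖fderiv ℂ f X V‖ ≤ C := by
  set u : ℂ → F := fun z => f (X + z • V) with hu_def
  have hu : Differentiable ℂ u := hf.comp ((differentiable_id.smul_const V).const_add X)
  have hp : HasFPowerSeriesOnBall u (cauchyPowerSeries u 0 ((1 : NNReal) : ℝ)) 0 ⊤ :=
    hu.hasFPowerSeriesOnBall 0 one_pos
  have hderiv : fderiv ℂ f X V = deriv u 0 := ((sliceDeriv hf X V).deriv).symm
  rw [hderiv, hp.hasFPowerSeriesAt.deriv]
  have hle1 : ‖(cauchyPowerSeries u 0 ((1 : NNReal) : ℝ) 1) fun _ => (1 : ℂ)‖ ≤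
      ‖cauchyPowerSeries u 0 ((1 : NNReal) : ℝ) 1‖ := by
    refine le_trans ((cauchyPowerSeries u 0 _ 1).le_opNorm _) ?_
    simp
  refine hle1.trans ?_
  have hle2 := norm_cauchyPowerSeries_le u 0 ((1 : NNReal) : ℝ) 1
  have hint : ∫ θ : ℝ in (0 : ℝ)..2 * Real.pi, ‖u (circleMap 0 1 θ)‖ ≤
      ∫ _ : ℝ in (0 : ℝ)..2 * Real.pi, C := by
    refine intervalIntegral.integral_mono_on (by positivity) ?_ (by simp) ?_
    · exact ((hu.continuous.comp (continuous_circleMap 0 1)).norm).intervalIntegrable _ _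
    · intro t _
      refine hC _ ?_
      rw [mem_closedBall]
      have : dist (X + circleMap 0 1 t • V) X = ‖circleMap 0 1 t • V‖ := by
        simp [dist_eq_norm]
      rw [this, norm_smul]
      have h3 : ‖circleMap 0 1 t‖ = 1 := by
        simp [norm_circleMap_zero]
      nlinarith [norm_nonneg V]
  have hCnn : (0 : ℝ) ≤ C := by
    have := hC X (by simp)
    exact le_trans (norm_nonneg _) this
  have hint' : ∫ θ : ℝ in (0 : ℝ)..2 * Real.pi, ‖u (circleMap 0 1 θ)‖ ≤ 2 * Real.pi * C := by
    refine le_trans hint (le_of_eq ?_)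
    simp
  have h6 : (2 * Real.pi)⁻¹ * (∫ θ : ℝ in (0 : ℝ)..2 * Real.pi, ‖u (circleMap 0 1 θ)‖) ≤
      (2 * Real.pi)⁻¹ * (2 * Real.pi * C) :=
    mul_le_mul_of_nonneg_left hint' (by positivity)
  have h7 : (2 * Real.pi)⁻¹ * (2 * Real.pi * C) = C := by
    have := Real.pi_ne_zero; field_simp
  refine le_trans ?_ (h6.trans_eq h7)
  simpa only [NNReal.coe_one, abs_one, inv_one, one_pow, mul_one] using hle2

theorem fderiv_opNorm_le [CompleteSpace F] {f : E → F} (hf : Differentiable ℂ f) {X : E} {C : ℝ}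
    (hC0 : 0 ≤ C) (hC : ∀ Y ∈ closedBall X 2, ‖f Y‖ ≤ C) : ‖fderiv ℂ f X‖ ≤ C := by
  refine ContinuousLinearMap.opNorm_le_bound _ hC0 fun V => ?_
  rcases eq_or_ne V 0 with rfl | hV
  · simp
  · have hVpos : (0 : ℝ) < ‖V‖ := norm_pos_iff.2 hV
    have h1 : ‖((‖V‖ : ℂ))⁻¹ • V‖ ≤ 1 := by
      rw [norm_smul, norm_inv]
      simp only [Complex.norm_real, norm_norm]
      rw [inv_mul_cancel₀ hVpos.ne']
    have h2 := fderiv_norm_le_of_bound hf hC h1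
    rw [_root_.map_smul, norm_smul, norm_inv] at h2
    simp only [Complex.norm_real, norm_norm] at h2
    calc ‖fderiv ℂ f X V‖ = ‖V‖ * (‖V‖⁻¹ * ‖fderiv ℂ f X V‖) := by field_simp
      _ ≤ ‖V‖ * C := by nlinarith
      _ = C * ‖V‖ := mul_comm _ _

theorem exists_fderiv_bound [CompleteSpace F] {f : E → F} (hf : Differentiable ℂ f) (W0 : E) (r : ℝ) :
    ∃ C : ℝ, ∀ X ∈ closedBall W0 r, ‖fderiv ℂ f X‖ ≤ C := by
  obtain ⟨C, hC⟩ := (isCompact_closedBall W0 (r + 2)).exists_bound_of_continuousOn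
    hf.continuous.continuousOn
  refine ⟨max C 0, fun X hX => fderiv_opNorm_le hf (le_max_right _ _) fun Y hY => ?_⟩
  refine le_trans (hC Y ?_) (le_max_left _ _)
  rw [mem_closedBall] at *
  calc dist Y W0 ≤ dist Y X + dist X W0 := dist_triangle _ _ _
    _ ≤ 2 + r := add_le_add hY hX
    _ = r + 2 := add_comm _ _

end Hartogs

section Hartogs2
open Metric

variable {E F : Type} [NormedAddCommGroup E] [NormedSpace ℂ E] [FiniteDimensional ℂ E]
  [NormedAddCommGroup F] [NormedSpace ℂ F] [FiniteDimensional ℂ F]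

/-- The Cauchy kernel for the unit circle. -/
private def cker (t : ℝ) : ℂ :=
  deriv (circleMap 0 1) t * ((circleMap 0 1 t)⁻¹ * (circleMap 0 1 t)⁻¹)

private theorem cker_continuous : Continuous cker := by
  have h1 : Continuous fun t : ℝ => deriv (circleMap 0 1) t := by
    simp only [deriv_circleMap]
    exact (continuous_circleMap 0 1).mul continuous_const
  have h2 : Continuous fun t : ℝ => (circleMap 0 1 t)⁻¹ :=
    (continuous_circleMap 0 1).inv₀ fun t => circleMap_ne_center one_ne_zero
  exact h1.mul (h2.mul h2)

private theorem cker_norm (t : ℝ) : ‖cker t‖ = 1 := by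
  have h1 : ‖circleMap 0 1 t‖ = 1 := by simp [norm_circleMap_zero]
  simp [cker, deriv_circleMap, h1]

theorem fderiv_apply_repr {f : E → F} (hf : Differentiable ℂ f) (V W : E) :
    fderiv ℂ f W V = (2 * (Real.pi : ℂ) * Complex.I)⁻¹ •
      ∫ t in (0 : ℝ)..2 * Real.pi, cker t • f (W + circleMap 0 1 t • V) := by
  set u : ℂ → F := fun z => f (W + z • V) with hu_def
  have hu : Differentiable ℂ u := hf.comp ((differentiable_id.smul_const V).const_add W)
  have hp : HasFPowerSeriesOnBall u (cauchyPowerSeries u 0 ((1 : NNReal) : ℝ)) 0 ⊤ :=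
    hu.hasFPowerSeriesOnBall 0 one_pos
  have hderiv : fderiv ℂ f W V = deriv u 0 := ((sliceDeriv hf W V).deriv).symm
  rw [hderiv, hp.hasFPowerSeriesAt.deriv, cauchyPowerSeries_apply]
  rw [circleIntegral]
  congr 1
  refine intervalIntegral.integral_congr fun t _ => ?_
  simp only [NNReal.coe_one, sub_zero, pow_one, one_div, smul_smul, cker]
  rfl

set_option synthInstance.maxHeartbeats 1000000 in
set_option maxHeartbeats 1000000 in
theorem differentiable_fderiv_apply {f : E → F} (hf : Differentiable ℂ f) (V : E) :
    Differentiable ℂ fun W => fderiv ℂ f W V := by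
  intro W0
  obtain ⟨C, hC⟩ := exists_fderiv_bound hf W0 (1 + ‖V‖)
  letI : MeasurableSpace E := borel E
  haveI : BorelSpace E := ⟨rfl⟩
  have hcont : ∀ x : E, Continuous fun t : ℝ => cker t • f (x + circleMap 0 1 t • V) :=
    fun x => cker_continuous.smul (hf.continuous.comp
      (continuous_const.add ((continuous_circleMap 0 1).smul continuous_const)))
  have hkey : HasFDerivAt
      (fun W : E => ∫ t in (0 : ℝ)..2 * Real.pi, cker t • f (W + circleMap 0 1 t • V))
      (∫ t in (0 : ℝ)..2 * Real.pi, cker t • fderiv ℂ f (W0 + circleMap 0 1 t • V)) W0 := by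
    refine intervalIntegral.hasFDerivAt_integral_of_dominated_of_fderiv_le
      (𝕜 := ℂ) (F' := fun (W : E) (t : ℝ) => cker t • fderiv ℂ f (W + circleMap 0 1 t • V))
      (bound := fun _ => max C 0) (s := Metric.ball W0 1) (Metric.ball_mem_nhds W0 one_pos)
      (Filter.Eventually.of_forall fun x => (hcont x).aestronglyMeasurable)
      ((hcont W0).intervalIntegrable _ _) ?_ ?_ intervalIntegrable_const ?_
    · have hγ : Continuous fun t : ℝ => W0 + circleMap 0 1 t • V :=
        continuous_const.add ((continuous_circleMap 0 1).smul continuous_const)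
      have hm : Measurable fun t : ℝ => fderiv ℂ f (W0 + circleMap 0 1 t • V) :=
        (measurable_fderiv ℂ f).comp hγ.measurable
      exact (cker_continuous.aestronglyMeasurable).smul hm.aestronglyMeasurable
    · refine MeasureTheory.ae_of_all _ fun t _ x hx => ?_
      show ‖cker t • fderiv ℂ f (x + circleMap 0 1 t • V)‖ ≤ max C 0
      have hmem : x + circleMap 0 1 t • V ∈ closedBall W0 (1 + ‖V‖) := by
        rw [mem_closedBall]
        have hcm : ‖circleMap 0 1 t‖ = 1 := by simp [norm_circleMap_zero]
        calc dist (x + circleMap 0 1 t • V) W0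
            ≤ dist (x + circleMap 0 1 t • V) x + dist x W0 := dist_triangle _ _ _
          _ ≤ ‖V‖ + 1 := by
              have hd : dist (x + circleMap 0 1 t • V) x = ‖circleMap 0 1 t • V‖ := by
                simp [dist_eq_norm]
              rw [hd, norm_smul, hcm, one_mul]
              exact add_le_add le_rfl (le_of_lt (mem_ball.1 hx))
          _ = 1 + ‖V‖ := add_comm _ _
      refine ContinuousLinearMap.opNorm_le_bound _ (le_max_right C 0) fun v => ?_
      rw [ContinuousLinearMap.smul_apply, norm_smul, cker_norm, one_mul]
      refine le_trans ((fderiv ℂ f _).le_opNorm v) ?_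
      exact mul_le_mul_of_nonneg_right (le_trans (hC _ hmem) (le_max_left _ _)) (norm_nonneg v)
    · refine MeasureTheory.ae_of_all _ fun t _ x hx => ?_
      have h1 : HasFDerivAt (fun y : E => f (y + circleMap 0 1 t • V))
          (fderiv ℂ f (x + circleMap 0 1 t • V)) x := by
        have := (hf (x + circleMap 0 1 t • V)).hasFDerivAt.comp x
          ((hasFDerivAt_id x).add_const (circleMap 0 1 t • V))
        simpa [Function.comp_def] using this
      exact h1.const_smul (cker t)
  have heq : (fun W => fderiv ℂ f W V) = fun W => (2 * (Real.pi : ℂ) * Complex.I)⁻¹ •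
      ∫ t in (0 : ℝ)..2 * Real.pi, cker t • f (W + circleMap 0 1 t • V) :=
    funext fun W => fderiv_apply_repr hf V W
  rw [heq]
  exact (hkey.const_smul _).differentiableAt

theorem differentiable_fderiv {f : E → F} (hf : Differentiable ℂ f) :
    Differentiable ℂ (fderiv ℂ f) := by
  classical
  let b := Module.finBasis ℂ E
  have hrep : (fderiv ℂ f) = fun W => ∑ i,
      (LinearMap.toContinuousLinearMap (b.coord i)).smulRight (fderiv ℂ f W (b i)) := by
    funext W
    refine ContinuousLinearMap.ext fun V => ?_
    simp only [ContinuousLinearMap.sum_apply, ContinuousLinearMap.smulRight_apply,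
      LinearMap.coe_toContinuousLinearMap', Module.Basis.coord_apply]
    have : (fderiv ℂ f W) V = (fderiv ℂ f W) (∑ i, b.repr V i • b i) := by
      rw [b.sum_repr V]
    rw [this, map_sum]
    exact Finset.sum_congr rfl fun i _ => by rw [_root_.map_smul]
  rw [hrep]
  refine Differentiable.fun_sum fun i _ => ?_
  have hcomp : (fun W => (LinearMap.toContinuousLinearMap (b.coord i)).smulRight
      (fderiv ℂ f W (b i))) = fun W =>
      (ContinuousLinearMap.smulRightL ℂ E F (LinearMap.toContinuousLinearMap (b.coord i)))
        (fderiv ℂ f W (b i)) := rfl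
  rw [hcomp]
  exact (ContinuousLinearMap.smulRightL ℂ E F _).differentiable.comp
    (differentiable_fderiv_apply hf (b i))

end Hartogs2

section Hartogs3
open Metric

variable {E : Type} [NormedAddCommGroup E] [NormedSpace ℂ E] [FiniteDimensional ℂ E]

theorem differentiable_contDiff_nat (n : ℕ) : ∀ {F : Type} [NormedAddCommGroup F]
    [NormedSpace ℂ F] [FiniteDimensional ℂ F] (f : E → F),
    Differentiable ℂ f → ContDiff ℂ n f := by
  induction n with
  | zero =>
    intro F _ _ _ f hf
    exact contDiff_zero.2 hf.continuous
  | succ n IH =>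
    intro F _ _ _ f hf
    rw [show ((n + 1 : ℕ) : WithTop ℕ∞) = (n : WithTop ℕ∞) + 1 by norm_cast]
    refine contDiff_succ_iff_fderiv.2 ⟨hf, ?_, ?_⟩
    · intro hω
      exact absurd hω (by simp)
    · haveI : FiniteDimensional ℂ (E →L[ℂ] F) :=
        LinearEquiv.finiteDimensional (LinearMap.toContinuousLinearMap (𝕜 := ℂ) (E := E) (F' := F))
      exact IH _ (differentiable_fderiv hf)

theorem Differentiable.contDiff_omega' {F : Type} [NormedAddCommGroup F]
    [NormedSpace ℂ F] [FiniteDimensional ℂ F] {f : E → F} (hf : Differentiable ℂ f) :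
    ContDiff ℂ (∞ : WithTop ℕ∞) f :=
  contDiff_infty.2 fun n => differentiable_contDiff_nat n f hf

end Hartogs3


section Theta15
open scoped ContDiff

variable {h g : ℕ}

theorem hinf_add_one : (∞ : WithTop ℕ∞) + 1 ≤ ∞ := by
  norm_cast

theorem hone_le_inf : (1 : WithTop ℕ∞) ≤ (∞ : WithTop ℕ∞) := by
  exact_mod_cast (le_top : (1 : ℕ∞) ≤ ⊤)

theorem pd_contDiff {f : Mat h g → ℂ} (hf : ContDiff ℂ (∞ : WithTop ℕ∞) f)
    (p : Fin h × Fin g) : ContDiff ℂ (∞ : WithTop ℕ∞) (pd p f) := by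
  have : pd p f = fun W =>
      (ContinuousLinearMap.apply ℂ ℂ (Matrix.single p.1 p.2 (1 : ℂ))) (fderiv ℂ f W) :=
    rfl
  rw [this]
  exact (ContinuousLinearMap.apply ℂ ℂ _).contDiff.comp (hf.fderiv_right hinf_add_one)

theorem pdIter_contDiff {f : Mat h g → ℂ} (hf : ContDiff ℂ (∞ : WithTop ℕ∞) f)
    (p : Fin h × Fin g) (m : ℕ) : ContDiff ℂ (∞ : WithTop ℕ∞) ((pd p)^[m] f) := by
  induction m with
  | zero => exact hf
  | succ m IH => rw [Function.iterate_succ_apply']; exact pd_contDiff IH p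

theorem pd_zero (p : Fin h × Fin g) : pd p (fun _ : Mat h g => (0 : ℂ)) = fun _ => (0 : ℂ) := by
  funext W
  simp [pd]

theorem pd_const_mul {f : Mat h g → ℂ} {W : Mat h g} (hf : DifferentiableAt ℂ f W)
    (c : ℂ) (p : Fin h × Fin g) : pd p (fun Y => c * f Y) W = c * pd p f W := by
  simp only [pd]
  erw [fderiv_const_mul hf c]
  rfl

theorem pd_sum {ι : Type*} {s : Finset ι} {F : ι → Mat h g → ℂ} {W : Mat h g}
    (hF : ∀ i ∈ s, DifferentiableAt ℂ (F i) W) (p : Fin h × Fin g) :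
    pd p (fun Y => ∑ i ∈ s, F i Y) W = ∑ i ∈ s, pd p (F i) W := by
  simp only [pd]
  erw [fderiv_fun_sum hF]
  exact map_sum (ContinuousLinearMap.apply ℂ ℂ (Matrix.single p.1 p.2 (1 : ℂ))) _ _

theorem pd_mul {a b : Mat h g → ℂ} {W : Mat h g} (ha : DifferentiableAt ℂ a W)
    (hb : DifferentiableAt ℂ b W) (p : Fin h × Fin g) :
    pd p (fun Y => a Y * b Y) W = a W * pd p b W + b W * pd p a W := by
  simp only [pd]
  erw [fderiv_fun_mul ha hb]
  rfl

theorem pd_comp_add {f : Mat h g → ℂ} (hf : Differentiable ℂ f) (D : Mat h g)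
    (p : Fin h × Fin g) : pd p (fun Y => f (Y + D)) = fun W => pd p f (W + D) := by
  funext W
  have h1 : HasFDerivAt (fun Y : Mat h g => f (Y + D)) (fderiv ℂ f (W + D)) W := by
    have := (hf (W + D)).hasFDerivAt.comp W ((hasFDerivAt_id W).add_const D)
    exact this
  simp only [pd, h1.fderiv]

theorem pdIter_comp_add {f : Mat h g → ℂ} (hf : ContDiff ℂ (∞ : WithTop ℕ∞) f) (D : Mat h g)
    (p : Fin h × Fin g) (m : ℕ) :
    (pd p)^[m] (fun Y => f (Y + D)) = fun W => (pd p)^[m] f (W + D) := by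
  induction m with
  | zero => rfl
  | succ m IH =>
    rw [Function.iterate_succ_apply', Function.iterate_succ_apply', IH]
    exact pd_comp_add ((pdIter_contDiff hf p m).differentiable (by simp)) D p

theorem pdIter_sum_const_mul {ι : Type*} {s : Finset ι} {F : ι → Mat h g → ℂ} (c : ι → ℂ)
    (hF : ∀ i ∈ s, ContDiff ℂ (∞ : WithTop ℕ∞) (F i)) (p : Fin h × Fin g) (m : ℕ) :
    (pd p)^[m] (fun Y => ∑ i ∈ s, c i * F i Y) =
      fun W => ∑ i ∈ s, c i * (pd p)^[m] (F i) W := by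
  induction m with
  | zero => rfl
  | succ m IH =>
    rw [Function.iterate_succ_apply', IH]
    funext W
    rw [pd_sum (fun i hi => ((contDiff_const.mul (pdIter_contDiff (hF i hi) p m)).differentiable
      (by simp)).differentiableAt) p]
    refine Finset.sum_congr rfl fun i hi => ?_
    rw [pd_const_mul (((pdIter_contDiff (hF i hi) p m).differentiable
      (by simp)).differentiableAt) (c i) p]
    rw [← Function.iterate_succ_apply' (pd p) m]

theorem pdIter_sum_const_mul_apply {ι : Type*} {s : Finset ι} {F : ι → Mat h g → ℂ} (c : ι → ℂ)
    (hF : ∀ i ∈ s, ContDiff ℂ (∞ : WithTop ℕ∞) (F i)) (p : Fin h × Fin g) (m : ℕ) (W : Mat h g) :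
    (pd p)^[m] (fun Y => ∑ i ∈ s, c i * F i Y) W =
      ∑ i ∈ s, c i * (pd p)^[m] (F i) W := by
  rw [pdIter_sum_const_mul c hF p m]

/-- foldr-composition of iterated derivatives along a list. -/
def ops (L : List (Fin h × Fin g)) (K : MIdx h g) (f : Mat h g → ℂ) : Mat h g → ℂ :=
  ((L.map fun p => (pd p)^[K p]).foldr (· ∘ ·) id) f

theorem ops_nil (K : MIdx h g) (f : Mat h g → ℂ) : ops [] K f = f := rfl

theorem ops_cons (p : Fin h × Fin g) (L : List (Fin h × Fin g)) (K : MIdx h g)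
    (f : Mat h g → ℂ) : ops (p :: L) K f = (pd p)^[K p] (ops L K f) := rfl

theorem pdPow_eq_ops (K : MIdx h g) (f : Mat h g → ℂ) :
    pdPow K f = ops (Finset.univ : Finset (Fin h × Fin g)).toList K f := rfl

theorem ops_contDiff {f : Mat h g → ℂ} (hf : ContDiff ℂ (∞ : WithTop ℕ∞) f)
    (L : List (Fin h × Fin g)) (K : MIdx h g) : ContDiff ℂ (∞ : WithTop ℕ∞) (ops L K f) := by
  induction L with
  | nil => exact hf
  | cons p L IH => rw [ops_cons]; exact pdIter_contDiff IH p (K p)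

theorem ops_comp_add {f : Mat h g → ℂ} (hf : ContDiff ℂ (∞ : WithTop ℕ∞) f) (D : Mat h g)
    (L : List (Fin h × Fin g)) (K : MIdx h g) :
    ops L K (fun Y => f (Y + D)) = fun W => ops L K f (W + D) := by
  induction L with
  | nil => rfl
  | cons p L IH =>
    rw [ops_cons, ops_cons, IH]
    exact pdIter_comp_add (ops_contDiff hf L K) D p (K p)

theorem ops_zero (L : List (Fin h × Fin g)) (K : MIdx h g) :
    ops L K (fun _ : Mat h g => (0 : ℂ)) = fun _ => (0 : ℂ) := by
  induction L with
  | nil => rfl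
  | cons p L IH =>
    rw [ops_cons, IH]
    exact Function.iterate_fixed (pd_zero p) (K p)

theorem pdPow_comp_add {f : Mat h g → ℂ} (hf : ContDiff ℂ (∞ : WithTop ℕ∞) f) (D : Mat h g)
    (K : MIdx h g) : pdPow K (fun Y => f (Y + D)) = fun W => pdPow K f (W + D) := by
  rw [pdPow_eq_ops, pdPow_eq_ops]
  exact ops_comp_add hf D _ K

theorem pdPow_zero_fn (K : MIdx h g) : pdPow K (fun _ : Mat h g => (0 : ℂ)) = fun _ => (0 : ℂ) := by
  rw [pdPow_eq_ops]; exact ops_zero _ K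

end Theta15


section ThetaAut
open scoped ContDiff

variable {h g : ℕ}

/-- The linear functional `V ↦ -2πi·σ(M V ξᵀ)`. -/
def autLin (M : Matrix (Fin h) (Fin h) ℤ) (ξ : MatZ h g) : Mat h g →L[ℂ] ℂ :=
  LinearMap.toContinuousLinearMap
    { toFun := fun V => -(2 * (Real.pi : ℂ) * Complex.I) *
        Matrix.trace ((M.map (Int.cast : ℤ → ℂ)) * V * (intMat ξ)ᵀ)
      map_add' := fun V₁ V₂ => by
        rw [Matrix.mul_add, Matrix.add_mul, Matrix.trace_add]; ring
      map_smul' := fun c V => by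
        rw [Matrix.mul_smul, Matrix.smul_mul, Matrix.trace_smul]
        simp only [smul_eq_mul, RingHom.id_apply]; ring }

theorem autLin_apply (M : Matrix (Fin h) (Fin h) ℤ) (ξ : MatZ h g) (V : Mat h g) :
    autLin M ξ V = -(2 * (Real.pi : ℂ) * Complex.I) *
      Matrix.trace ((M.map (Int.cast : ℤ → ℂ)) * V * (intMat ξ)ᵀ) := rfl

theorem autFactor_eq (M : Matrix (Fin h) (Fin h) ℤ) (Ω : Matrix (Fin g) (Fin g) ℂ)
    (ξ : MatZ h g) : autFactor M Ω ξ = fun W : Mat h g =>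
      Complex.exp (-((Real.pi : ℂ) * Complex.I) *
        Matrix.trace ((M.map (Int.cast : ℤ → ℂ)) * (intMat ξ * Ω * (intMat ξ)ᵀ)) +
        autLin M ξ W) := by
  funext W
  unfold autFactor
  congr 1
  have hsm : (M.map (Int.cast : ℤ → ℂ)) * ((2 : ℂ) • (W * (intMat ξ)ᵀ)) =
      (2 : ℂ) • ((M.map (Int.cast : ℤ → ℂ)) * W * (intMat ξ)ᵀ) := by
    rw [Matrix.mul_smul, Matrix.mul_assoc]
  rw [Matrix.mul_add, Matrix.trace_add, hsm, Matrix.trace_smul, autLin_apply]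
  simp only [smul_eq_mul]
  ring

theorem autFactor_contDiff (M : Matrix (Fin h) (Fin h) ℤ) (Ω : Matrix (Fin g) (Fin g) ℂ)
    (ξ : MatZ h g) : ContDiff ℂ (∞ : WithTop ℕ∞) (autFactor M Ω ξ) := by
  rw [autFactor_eq]
  exact (contDiff_const.add (autLin M ξ).contDiff).cexp

theorem autFactor_ne_zero (M : Matrix (Fin h) (Fin h) ℤ) (Ω : Matrix (Fin g) (Fin g) ℂ)
    (ξ : MatZ h g) (W : Mat h g) : autFactor M Ω ξ W ≠ 0 := by
  unfold autFactor
  exact Complex.exp_ne_zero _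

theorem pd_autFactor (M : Matrix (Fin h) (Fin h) ℤ) (Ω : Matrix (Fin g) (Fin g) ℂ)
    (ξ : MatZ h g) (p : Fin h × Fin g) (W : Mat h g) :
    pd p (autFactor M Ω ξ) W =
      autLin M ξ (Matrix.single p.1 p.2 1) * autFactor M Ω ξ W := by
  rw [autFactor_eq]
  have h1 : HasFDerivAt (fun Y : Mat h g => Complex.exp
      (-((Real.pi : ℂ) * Complex.I) *
        Matrix.trace ((M.map (Int.cast : ℤ → ℂ)) * (intMat ξ * Ω * (intMat ξ)ᵀ)) +
        autLin M ξ Y))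
      (Complex.exp (-((Real.pi : ℂ) * Complex.I) *
        Matrix.trace ((M.map (Int.cast : ℤ → ℂ)) * (intMat ξ * Ω * (intMat ξ)ᵀ)) +
        autLin M ξ W) • (autLin M ξ : Mat h g →L[ℂ] ℂ)) W :=
    ((autLin M ξ).hasFDerivAt.const_add _).cexp
  simp only [pd, h1.fderiv, ContinuousLinearMap.smul_apply, smul_eq_mul]
  ring

/-- Pascal identity for the sums appearing in the binomial expansion. -/
theorem pascal_sum (c : ℂ) (m : ℕ) (x : ℕ → ℂ) :
    (∑ j ∈ Finset.range (m + 1), (m.choose j : ℂ) * c ^ (m - j) * x j) * c +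
      ∑ j ∈ Finset.range (m + 1), (m.choose j : ℂ) * c ^ (m - j) * x (j + 1) =
    ∑ j ∈ Finset.range (m + 2), ((m + 1).choose j : ℂ) * c ^ (m + 1 - j) * x j := by
  have hL1 : (∑ j ∈ Finset.range (m + 1), (m.choose j : ℂ) * c ^ (m - j) * x j) * c =
      ∑ j ∈ Finset.range (m + 1), (m.choose j : ℂ) * c ^ (m + 1 - j) * x j := by
    rw [Finset.sum_mul]
    refine Finset.sum_congr rfl fun j hj => ?_
    have hj' : j ≤ m := Nat.lt_succ_iff.1 (Finset.mem_range.1 hj)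
    have : m + 1 - j = (m - j) + 1 := by omega
    rw [this, pow_succ]; ring
  rw [hL1]
  have hL2 : ∑ j ∈ Finset.range (m + 1), (m.choose j : ℂ) * c ^ (m + 1 - j) * x j =
      (∑ j ∈ Finset.range m, (m.choose (j + 1) : ℂ) * c ^ (m - j) * x (j + 1)) +
        c ^ (m + 1) * x 0 := by
    rw [Finset.sum_range_succ' (fun j => (m.choose j : ℂ) * c ^ (m + 1 - j) * x j) m]
    congr 1
    · refine Finset.sum_congr rfl fun j hj => ?_
      have : m + 1 - (j + 1) = m - j := by omega
      rw [this]
    · simp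
  have hL3 : ∑ j ∈ Finset.range m, (m.choose (j + 1) : ℂ) * c ^ (m - j) * x (j + 1) =
      ∑ j ∈ Finset.range (m + 1), (m.choose (j + 1) : ℂ) * c ^ (m - j) * x (j + 1) := by
    rw [Finset.sum_range_succ]
    simp [Nat.choose_succ_self]
  have hR : ∑ j ∈ Finset.range (m + 2), ((m + 1).choose j : ℂ) * c ^ (m + 1 - j) * x j =
      (∑ j ∈ Finset.range (m + 1), ((m + 1).choose (j + 1) : ℂ) * c ^ (m - j) * x (j + 1)) +
        c ^ (m + 1) * x 0 := by
    rw [Finset.sum_range_succ' (fun j => ((m + 1).choose j : ℂ) * c ^ (m + 1 - j) * x j) (m + 1)]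
    congr 1
    · refine Finset.sum_congr rfl fun j hj => ?_
      have : m + 1 - (j + 1) = m - j := by omega
      rw [this]
    · simp
  rw [hL2, hL3, hR]
  have hsplit : ∑ j ∈ Finset.range (m + 1), ((m + 1).choose (j + 1) : ℂ) * c ^ (m - j) * x (j + 1) =
      ∑ j ∈ Finset.range (m + 1), ((m.choose j : ℂ) + (m.choose (j + 1) : ℂ)) *
        c ^ (m - j) * x (j + 1) := by
    refine Finset.sum_congr rfl fun j hj => ?_
    rw [Nat.choose_succ_succ]
    push_cast
    ring
  rw [hsplit]
  have hcomb : ∑ j ∈ Finset.range (m + 1),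
      ((m.choose j : ℂ) + (m.choose (j + 1) : ℂ)) * c ^ (m - j) * x (j + 1) =
      (∑ j ∈ Finset.range (m + 1), (m.choose (j + 1) : ℂ) * c ^ (m - j) * x (j + 1)) +
        ∑ j ∈ Finset.range (m + 1), (m.choose j : ℂ) * c ^ (m - j) * x (j + 1) := by
    rw [← Finset.sum_add_distrib]
    exact Finset.sum_congr rfl fun j _ => by ring
  rw [hcomb]
  ring

theorem pdIter_aut_mul (M : Matrix (Fin h) (Fin h) ℤ) (Ω : Matrix (Fin g) (Fin g) ℂ)
    (ξ : MatZ h g) (p : Fin h × Fin g) {f : Mat h g → ℂ}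
    (hf : ContDiff ℂ (∞ : WithTop ℕ∞) f) (m : ℕ) :
    (pd p)^[m] (fun W => autFactor M Ω ξ W * f W) = fun W => autFactor M Ω ξ W *
      ∑ j ∈ Finset.range (m + 1), (m.choose j : ℂ) *
        autLin M ξ (Matrix.single p.1 p.2 1) ^ (m - j) * (pd p)^[j] f W := by
  set c := autLin M ξ (Matrix.single p.1 p.2 1) with hc
  induction m with
  | zero =>
    funext W
    simp
  | succ m IH =>
    rw [Function.iterate_succ_apply', IH]
    funext W
    have hterm : ∀ j : ℕ, ContDiff ℂ (∞ : WithTop ℕ∞)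
        (fun Y => (m.choose j : ℂ) * c ^ (m - j) * (pd p)^[j] f Y) :=
      fun j => contDiff_const.mul (pdIter_contDiff hf p j)
    have hS : ContDiff ℂ (∞ : WithTop ℕ∞) (fun Y => ∑ j ∈ Finset.range (m + 1),
        (m.choose j : ℂ) * c ^ (m - j) * (pd p)^[j] f Y) :=
      ContDiff.sum fun j _ => hterm j
    rw [pd_mul ((autFactor_contDiff M Ω ξ).differentiable (by simp)).differentiableAt
      ((hS.differentiable (by simp)).differentiableAt) p]
    rw [pd_autFactor M Ω ξ p W, ← hc]
    rw [pd_sum (fun j _ => ((hterm j).differentiable (by simp)).differentiableAt) p]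
    have hpdterm : ∀ j ∈ Finset.range (m + 1),
        pd p (fun Y => (m.choose j : ℂ) * c ^ (m - j) * (pd p)^[j] f Y) W =
          (m.choose j : ℂ) * c ^ (m - j) * (pd p)^[j + 1] f W := by
      intro j _
      rw [pd_const_mul ((pdIter_contDiff hf p j).differentiable (by simp)).differentiableAt
        ((m.choose j : ℂ) * c ^ (m - j)) p]
      rw [← Function.iterate_succ_apply' (pd p) j]
    rw [Finset.sum_congr rfl hpdterm]
    have hps := pascal_sum c m (fun j => (pd p)^[j] f W)
    calc autFactor M Ω ξ W * ∑ j ∈ Finset.range (m + 1),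
          (m.choose j : ℂ) * c ^ (m - j) * (pd p)^[j + 1] f W +
        (∑ j ∈ Finset.range (m + 1), (m.choose j : ℂ) * c ^ (m - j) * (pd p)^[j] f W) *
          (c * autFactor M Ω ξ W)
        = autFactor M Ω ξ W *
          ((∑ j ∈ Finset.range (m + 1), (m.choose j : ℂ) * c ^ (m - j) * (pd p)^[j] f W) * c +
            ∑ j ∈ Finset.range (m + 1), (m.choose j : ℂ) * c ^ (m - j) * (pd p)^[j + 1] f W) := by
          ring
      _ = _ := by rw [hps]

/-- The `ξ`-monomial attached to a multi-index. -/
def monAL (M : Matrix (Fin h) (Fin h) ℤ) (ξ : MatZ h g) (d : MIdx h g) : ℂ :=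
  ∏ q : Fin h × Fin g, autLin M ξ (Matrix.single q.1 q.2 1) ^ d q

theorem monAL_zero (M : Matrix (Fin h) (Fin h) ℤ) (ξ : MatZ h g) :
    monAL M ξ (fun _ => 0) = 1 := by
  simp [monAL]

theorem monAL_add (M : Matrix (Fin h) (Fin h) ℤ) (ξ : MatZ h g) (a b : MIdx h g) :
    monAL M ξ (a + b) = monAL M ξ a * monAL M ξ b := by
  rw [monAL, monAL, monAL, ← Finset.prod_mul_distrib]
  exact Finset.prod_congr rfl fun q _ => by rw [Pi.add_apply, pow_add]

theorem monAL_single (M : Matrix (Fin h) (Fin h) ℤ) (ξ : MatZ h g) (p : Fin h × Fin g) (n : ℕ) :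
    monAL M ξ (Pi.single p n) = autLin M ξ (Matrix.single p.1 p.2 1) ^ n := by
  rw [monAL]
  refine Finset.prod_eq_single p (fun q _ hq => ?_) (fun hp => absurd (Finset.mem_univ p) hp)
    |>.trans ?_
  · rw [Pi.single_eq_of_ne hq, pow_zero]
  · rw [Pi.single_eq_same]

/-- Structural expansion of iterated derivatives of `autFactor · f` along a list. -/
theorem main2 (M : Matrix (Fin h) (Fin h) ℤ) (Ω : Matrix (Fin g) (Fin g) ℂ)
    (L : List (Fin h × Fin g)) (hL : L.Nodup) (K : MIdx h g) {f : Mat h g → ℂ}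
    (hf : ContDiff ℂ (∞ : WithTop ℕ∞) f) :
    ∃ (ι : Type) (_ : Fintype ι) (d : ι → MIdx h g) (G : ι → Mat h g → ℂ) (i0 : ι),
      (∀ i, ContDiff ℂ (∞ : WithTop ℕ∞) (G i)) ∧ G i0 = f ∧
      (d i0 = fun q => if q ∈ L then K q else 0) ∧
      (∀ i, d i ≤ fun q => if q ∈ L then K q else 0) ∧
      (∀ i, i ≠ i0 → d i ≠ fun q => if q ∈ L then K q else 0) ∧
      ∀ (ξ : MatZ h g) (W : Mat h g),
        ops L K (fun Y => autFactor M Ω ξ Y * f Y) W =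
          autFactor M Ω ξ W * ∑ i, monAL M ξ (d i) * G i W := by
  classical
  induction L with
  | nil =>
    refine ⟨PUnit, inferInstance, fun _ _ => 0, fun _ => f, PUnit.unit, fun _ => hf, rfl,
      ?_, ?_, ?_, ?_⟩
    · funext q; simp
    · intro i q; simp
    · intro i hi; exact absurd rfl hi
    · intro ξ W
      rw [ops_nil]
      have : monAL M ξ (fun _ => 0) = 1 := monAL_zero M ξ
      simp [this]
  | cons p L IH =>
    have hp : p ∉ L := (List.nodup_cons.1 hL).1
    obtain ⟨ι, hι, d, G, i0, hG, hGi0, hdi0, hdle, hdne, heq⟩ := IH (List.nodup_cons.1 hL).2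
    letI := hι
    set m := K p with hm
    refine ⟨ι × Fin (m + 1), inferInstance,
      (fun ij => d ij.1 + Pi.single p (m - (ij.2 : ℕ))),
      (fun ij Y => ((m.choose (ij.2 : ℕ)) : ℂ) * (pd p)^[(ij.2 : ℕ)] (G ij.1) Y),
      (i0, ⟨0, Nat.succ_pos m⟩), ?_, ?_, ?_, ?_, ?_, ?_⟩
    · intro ij
      exact contDiff_const.mul (pdIter_contDiff (hG ij.1) p _)
    · funext Y
      dsimp only
      simp [hGi0]
    · funext q
      dsimp only
      by_cases hq : q = p
      · subst hq
        have h1 : d i0 q = 0 := by rw [hdi0]; simp [hp]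
        simp [h1, List.mem_cons, hm]
      · have h1 : d i0 q = if q ∈ L then K q else 0 := by rw [hdi0]
        rw [Pi.add_apply, Pi.single_eq_of_ne hq, h1]
        simp [List.mem_cons, hq]
    · intro ij
      rw [Pi.le_def]
      intro q
      dsimp only
      by_cases hq : q = p
      · subst hq
        have h1 : d ij.1 q ≤ 0 := by
          have := hdle ij.1 q
          simpa [hp] using this
        rw [Pi.add_apply, Pi.single_eq_same]
        have h2 : (if q ∈ q :: L then K q else 0) = K q := by simp
        rw [h2, ← hm]
        have h3 : m - (ij.2 : ℕ) ≤ m := Nat.sub_le _ _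
        omega
      · have h1 : d ij.1 q ≤ if q ∈ L then K q else 0 := hdle ij.1 q
        rw [Pi.add_apply, Pi.single_eq_of_ne hq, add_zero]
        simpa [List.mem_cons, hq] using h1
    · rintro ⟨i, j⟩ hij hcontra
      have hq : ∀ q, d i q + (Pi.single p (m - (j : ℕ)) : MIdx h g) q =
          if q ∈ p :: L then K q else 0 := by
        intro q
        have h := congrFun hcontra q
        simpa only [Pi.add_apply] using h
      have hdip : d i p = 0 := by
        have := hdle i p
        simpa [hp] using this
      have hjp := hq p
      rw [Pi.single_eq_same, hdip, zero_add] at hjp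
      simp only [List.mem_cons, true_or, if_true, ← hm] at hjp
      have hj0 : (j : ℕ) = 0 := by
        have hjm : (j : ℕ) ≤ m := Nat.lt_succ_iff.1 j.2
        omega
      have hdi : d i = fun q => if q ∈ L then K q else 0 := by
        funext q
        by_cases hqp : q = p
        · subst hqp; rw [hdip]; simp [hp]
        · have := hq q
          rw [Pi.single_eq_of_ne hqp, add_zero] at this
          rw [this]
          simp [List.mem_cons, hqp]
      have hii0 : i = i0 := by
        by_contra hne
        exact hdne i hne hdi
      apply hij
      have hj : j = (⟨0, Nat.succ_pos m⟩ : Fin (m + 1)) := Fin.ext hj0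
      rw [hii0, hj]
    · intro ξ W
      set c := autLin M ξ (Matrix.single p.1 p.2 1) with hcdef
      have h2 : ops L K (fun Y => autFactor M Ω ξ Y * f Y) =
          fun Y => ∑ i, monAL M ξ (d i) * (autFactor M Ω ξ Y * G i Y) := by
        funext Y
        rw [heq ξ Y, Finset.mul_sum]
        exact Finset.sum_congr rfl fun i _ => by ring
      have h25 : ops (p :: L) K (fun Y => autFactor M Ω ξ Y * f Y) W =
          (pd p)^[m] (fun Y => ∑ i, monAL M ξ (d i) * (autFactor M Ω ξ Y * G i Y)) W := by
        rw [ops_cons, h2]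
      have h26 := pdIter_sum_const_mul_apply (s := (Finset.univ : Finset ι))
        (F := fun i Y => autFactor M Ω ξ Y * G i Y) (fun i => monAL M ξ (d i))
        (fun i _ => (autFactor_contDiff M Ω ξ).mul (hG i)) p m W
      have h3 : ∀ i : ι, (pd p)^[m] (fun Y => autFactor M Ω ξ Y * G i Y) W =
          autFactor M Ω ξ W * ∑ j ∈ Finset.range (m + 1),
            (m.choose j : ℂ) * c ^ (m - j) * (pd p)^[j] (G i) W := by
        intro i
        rw [pdIter_aut_mul M Ω ξ p (hG i) m]
      have hbig : (∑ i : ι, monAL M ξ (d i) *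
            (pd p)^[m] (fun Y => autFactor M Ω ξ Y * G i Y) W) =
          autFactor M Ω ξ W * ∑ ij : ι × Fin (m + 1),
            monAL M ξ (d ij.1 + Pi.single p (m - (ij.2 : ℕ))) *
              (((m.choose (ij.2 : ℕ)) : ℂ) * (pd p)^[(ij.2 : ℕ)] (G ij.1) W) := by
        calc (∑ i : ι, monAL M ξ (d i) *
              (pd p)^[m] (fun Y => autFactor M Ω ξ Y * G i Y) W)
            = ∑ i : ι, ∑ j ∈ Finset.range (m + 1), autFactor M Ω ξ W *
                (monAL M ξ (d i + Pi.single p (m - j)) *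
                  ((m.choose j : ℂ) * (pd p)^[j] (G i) W)) := by
              refine Finset.sum_congr rfl fun i _ => ?_
              rw [h3 i, Finset.mul_sum, Finset.mul_sum]
              refine Finset.sum_congr rfl fun j hj => ?_
              rw [monAL_add, monAL_single, ← hcdef]
              ring
          _ = autFactor M Ω ξ W * ∑ ij : ι × Fin (m + 1),
                monAL M ξ (d ij.1 + Pi.single p (m - (ij.2 : ℕ))) *
                  (((m.choose (ij.2 : ℕ)) : ℂ) * (pd p)^[(ij.2 : ℕ)] (G ij.1) W) := by
              rw [Finset.mul_sum, Fintype.sum_prod_type]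
              refine Finset.sum_congr rfl fun i _ => ?_
              rw [← Finset.sum_range (fun j => autFactor M Ω ξ W *
                (monAL M ξ (d i + (Pi.single p (m - j) : MIdx h g)) *
                  ((m.choose j : ℂ) * (pd p)^[j] (G i) W)))]
      exact (h25.trans h26).trans hbig

end ThetaAut


section ThetaPoly
open scoped ContDiff

variable {h g : ℕ}

theorem trace_single (A : Matrix (Fin h) (Fin h) ℂ) (X : Mat h g) (k : Fin h) (a : Fin g) :
    Matrix.trace (A * Matrix.single k a (1 : ℂ) * Xᵀ) = ∑ i, A i k * X i a := by
  classical
  simp only [Matrix.trace, Matrix.diag_apply, Matrix.mul_apply, Matrix.transpose_apply,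
    Matrix.single, Matrix.of_apply]
  refine Finset.sum_congr rfl fun i _ => ?_
  have h1 : ∀ l : Fin g, (∑ j : Fin h, A i j * (if k = j ∧ a = l then (1 : ℂ) else 0)) * X i l =
      (if l = a then A i k * X i a else 0) := by
    intro l
    by_cases hla : l = a
    · subst hla
      simp [Finset.sum_ite_eq, Finset.mul_sum, mul_ite]
    · have hz : ∀ j : Fin h, (if k = j ∧ a = l then (1 : ℂ) else 0) = 0 := by
        intro j
        have hcc : ¬(k = j ∧ a = l) := fun hcc => hla hcc.2.symm
        simp [hcc]
      simp [hz, hla]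
  calc ∑ l : Fin g, (∑ j : Fin h, A i j * (if k = j ∧ a = l then (1 : ℂ) else 0)) * X i l
      = ∑ l : Fin g, (if l = a then A i k * X i a else 0) := Finset.sum_congr rfl fun l _ => h1 l
    _ = A i k * X i a := by simp

theorem autLin_single (M : Matrix (Fin h) (Fin h) ℤ) (hM : M.IsSymm) (ξ : MatZ h g)
    (p : Fin h × Fin g) : autLin M ξ (Matrix.single p.1 p.2 1) =
      -(2 * (Real.pi : ℂ) * Complex.I) * (((M * ξ) p.1 p.2 : ℤ) : ℂ) := by
  rw [autLin_apply, trace_single]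
  congr 1
  rw [Matrix.mul_apply]
  push_cast
  refine Finset.sum_congr rfl fun i _ => ?_
  rw [intMat, Matrix.map_apply, Matrix.map_apply]
  have hsym : M i p.1 = M p.1 i := by
    have := congrFun (congrFun hM p.1) i
    simpa [Matrix.transpose_apply] using this
  rw [hsym]

theorem base_repr_inj (B : ℕ) : ∀ (m : ℕ) (a b : Fin m → ℕ), (∀ i, a i < B) → (∀ i, b i < B) →
    (∑ i, a i * B ^ (i : ℕ)) = (∑ i, b i * B ^ (i : ℕ)) → a = b := by
  intro m
  induction m with
  | zero =>
    intro a b _ _ _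
    funext i
    exact absurd i.2 (Nat.not_lt_zero _)
  | succ m IH =>
    intro a b ha hb hsum
    rw [Fin.sum_univ_succ, Fin.sum_univ_succ] at hsum
    have hfac : ∀ c : Fin (m + 1) → ℕ, (∑ i : Fin m, c i.succ * B ^ ((i.succ : Fin (m+1)) : ℕ)) =
        B * ∑ i : Fin m, c i.succ * B ^ (i : ℕ) := by
      intro c
      rw [Finset.mul_sum]
      refine Finset.sum_congr rfl fun i _ => ?_
      rw [Fin.val_succ, pow_succ]
      ring
    rw [hfac a, hfac b] at hsum
    simp only [Fin.val_zero, pow_zero, mul_one] at hsum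
    have hB : 0 < B := lt_of_le_of_lt (Nat.zero_le _) (ha 0)
    have h0 : a 0 = b 0 := by
      have hmod := congrArg (· % B) hsum
      simpa [Nat.add_mul_mod_self_left, Nat.mod_eq_of_lt (ha 0), Nat.mod_eq_of_lt (hb 0)]
        using hmod
    have htail : (fun i : Fin m => a i.succ) = fun i : Fin m => b i.succ := by
      refine IH _ _ (fun i => ha _) (fun i => hb _) ?_
      have hmul : B * (∑ i : Fin m, a i.succ * B ^ (i : ℕ)) =
          B * ∑ i : Fin m, b i.succ * B ^ (i : ℕ) := by omega
      exact Nat.eq_of_mul_eq_mul_left hB hmul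
    funext i
    refine Fin.cases h0 (fun j => ?_) i
    exact congrFun htail j

theorem coeff_zero_of_nat_roots {ι : Type*} [Fintype ι] (c : ι → ℂ) (e : ι → ℕ)
    (hv : ∀ n : ℕ, ∑ i, c i * (n : ℂ) ^ e i = 0) (k : ℕ) :
    ∑ i ∈ Finset.univ.filter (fun i => e i = k), c i = 0 := by
  classical
  set P : Polynomial ℂ := ∑ i, Polynomial.C (c i) * Polynomial.X ^ e i with hP
  have hPz : P = 0 := by
    refine Polynomial.eq_zero_of_infinite_isRoot P ?_
    refine Set.infinite_of_injective_forall_mem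
      (f := fun n : ℕ => (n : ℂ)) Nat.cast_injective fun n => ?_
    show P.IsRoot ((n : ℂ))
    rw [Polynomial.IsRoot, hP]
    rw [Polynomial.eval_finset_sum]
    simpa [Polynomial.eval_mul, Polynomial.eval_pow] using hv n
  have hc := congrArg (fun Q : Polynomial ℂ => Q.coeff k) hPz
  simp only [hP, Polynomial.finset_sum_coeff, Polynomial.coeff_C_mul, Polynomial.coeff_X_pow,
    Polynomial.coeff_zero, mul_ite, mul_one, mul_zero] at hc
  rw [Finset.sum_filter]
  have hflip : (∑ i, if e i = k then c i else 0) = ∑ i, if k = e i then c i else 0 := by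
    refine Finset.sum_congr rfl fun i _ => ?_
    by_cases hei : e i = k
    · simp [hei]
    · simp [hei, Ne.symm hei]
  rw [hflip]
  exact hc

end ThetaPoly

/-- if `φ_K ∈ T_M(Ω)` for `K` in a finite set and
`Σ_K (∂/∂W)^K φ_K = 0` identically, then every `φ_K = 0`; i.e. the map
`(φ_K) ↦ Σ_K (∂/∂W)^K φ_K` on families of theta functions of level `M` is injective. -/
theorem pdPow_sum_injective {h g : ℕ}
    (Ω : Matrix (Fin g) (Fin g) ℂ) (hΩ : IsSiegel Ω)
    (M : Matrix (Fin h) (Fin h) ℤ) (hM : IsEvenIntegral M)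
    (S : Finset (MIdx h g)) (φ : MIdx h g → Mat h g → ℂ)
    (hφ : ∀ K ∈ S, IsThetaFn M Ω (φ K))
    (hsum : (∑ K ∈ S, pdPow K (φ K)) = 0) :
    ∀ K ∈ S, φ K = 0 := by
  classical
  -- `det M ≠ 0`
  have hdetR : ((M.det : ℤ) : ℝ) = (M.map (Int.cast : ℤ → ℝ)).det := by
    have h0 := RingHom.map_det (Int.castRingHom ℝ) M
    simpa [RingHom.mapMatrix_apply, Int.coe_castRingHom] using h0
  have hdetpos : (0 : ℝ) < ((M.det : ℤ) : ℝ) := by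
    rw [hdetR]
    exact hM.2.1.det_pos
  have hdetne : (M.det : ℤ) ≠ 0 := by
    intro hc
    rw [hc] at hdetpos
    simp at hdetpos
  set c0 : ℂ := -(2 * (Real.pi : ℂ) * Complex.I) * ((M.det : ℤ) : ℂ) with hc0def
  have hc0 : c0 ≠ 0 := by
    rw [hc0def]
    refine mul_ne_zero (neg_ne_zero.2 (mul_ne_zero (mul_ne_zero two_ne_zero ?_)
      Complex.I_ne_zero)) ?_
    · exact Complex.ofReal_ne_zero.2 Real.pi_ne_zero
    · exact_mod_cast hdetne
  suffices H : ∀ (n : ℕ) (T : Finset (MIdx h g)), T.card ≤ n →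
      (∀ J ∈ T, IsThetaFn M Ω (φ J)) →
      ((∑ J ∈ T, pdPow J (φ J)) = 0) → ∀ J ∈ T, φ J = 0 by
    exact H S.card S le_rfl hφ hsum
  intro n
  induction n with
  | zero =>
    intro T hT _ _ J hJ
    rw [Nat.le_zero, Finset.card_eq_zero] at hT
    subst hT
    exact absurd hJ (Finset.notMem_empty J)
  | succ n IH =>
    intro T hT hφT hsumT K hK
    obtain ⟨K0, hK0T, hK0max⟩ : ∃ K0 ∈ T, ∀ x ∈ T, ¬K0 < x := by
      obtain ⟨K0, hK0⟩ := Finset.exists_maximal ⟨K, hK⟩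
      exact ⟨K0, hK0.prop, fun x hx hlt => lt_irrefl _ (lt_of_lt_of_le hlt (hK0.2 hx hlt.le))⟩
    have hsm : ∀ J, J ∈ T → ContDiff ℂ (∞ : WithTop ℕ∞) (φ J) :=
      fun J hJ => ((hφT J hJ).1).contDiff_omega'
    -- Core claim: φ K0 = 0
    have hcore : φ K0 = 0 := by
      have hdata := fun (J : {x // x ∈ T}) =>
        main2 M Ω (Finset.univ : Finset (Fin h × Fin g)).toList
          (Finset.nodup_toList _) J.1 (hsm J.1 J.2)
      choose ι hι d G i0 hG hGi0 hdi0 hdle hdne heq using hdata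
      letI : ∀ J : {x // x ∈ T}, Fintype (ι J) := hι
      have hKL : ∀ J : MIdx h g, (fun q => if q ∈ (Finset.univ : Finset (Fin h × Fin g)).toList
          then J q else 0) = J := by
        intro J
        funext q
        simp [Finset.mem_toList]
      set B : ℕ := 1 + T.sup (fun J => Finset.univ.sup J) with hBdef
      have hBbound : ∀ J ∈ T, ∀ q, J q < B := by
        intro J hJ q
        have h1 : J q ≤ Finset.univ.sup J := Finset.le_sup (Finset.mem_univ q)
        have h2 : Finset.univ.sup J ≤ T.sup (fun J => Finset.univ.sup J) := Finset.le_sup hJ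
        omega
      set e := Fintype.equivFin (Fin h × Fin g) with hedef
      set wf : MIdx h g → ℕ := fun dd => ∑ q, dd q * B ^ ((e q : ℕ)) with hwf
      have hwinj : ∀ d1 d2 : MIdx h g, (∀ q, d1 q < B) → (∀ q, d2 q < B) →
          wf d1 = wf d2 → d1 = d2 := by
        intro d1 d2 h1 h2 hw
        have hsum1 : ∀ dd : MIdx h g, wf dd = ∑ i : Fin (Fintype.card (Fin h × Fin g)),
            dd (e.symm i) * B ^ (i : ℕ) := by
          intro dd
          simp only [hwf]
          rw [← Equiv.sum_comp e.symm (fun q => dd q * B ^ ((e q : ℕ)))]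
          refine Finset.sum_congr rfl fun i _ => ?_
          rw [Equiv.apply_symm_apply]
        rw [hsum1 d1, hsum1 d2] at hw
        have hre := base_repr_inj B _ (fun i => d1 (e.symm i)) (fun i => d2 (e.symm i))
          (fun i => h1 _) (fun i => h2 _) hw
        funext q
        have h3 := congrFun hre (e q)
        simpa using h3
      funext W0
      show φ K0 W0 = (0 : Mat h g → ℂ) W0
      rw [Pi.zero_apply]
      -- the fundamental vanishing identity
      have hvan : ∀ ξ : MatZ h g,
          (∑ J ∈ T.attach, ∑ i : ι J, monAL M ξ (d J i) * G J i W0) = 0 := by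
        intro ξ
        set D : Mat h g := intMat ξ * Ω with hD
        have h1 : (∑ J ∈ T, pdPow J (φ J) (W0 + D)) = 0 := by
          have := congrFun hsumT (W0 + D)
          simpa [Finset.sum_apply] using this
        have h2 : ∀ J ∈ T, pdPow J (φ J) (W0 + D) =
            ops (Finset.univ : Finset (Fin h × Fin g)).toList J
              (fun Y => autFactor M Ω ξ Y * φ J Y) W0 := by
          intro J hJ
          have htr : (fun Y => φ J (Y + D)) = fun Y => autFactor M Ω ξ Y * φ J Y := by
            funext Y
            have h5 := (hφT J hJ).2 Y ξ 0
            have hz : intMat (0 : MatZ h g) = (0 : Mat h g) := by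
              unfold intMat
              ext i j
              simp
            rw [hz, add_zero] at h5
            exact h5
          have h6 := congrFun (pdPow_comp_add (hsm J hJ) D J) W0
          rw [← h6, htr, pdPow_eq_ops]
        rw [Finset.sum_congr rfl h2] at h1
        have h3 : ∀ J ∈ T.attach, ops (Finset.univ : Finset (Fin h × Fin g)).toList J.1
            (fun Y => autFactor M Ω ξ Y * φ J.1 Y) W0 =
            autFactor M Ω ξ W0 * ∑ i : ι J, monAL M ξ (d J i) * G J i W0 :=
          fun J _ => heq J ξ W0
        have h4 : (∑ J ∈ T.attach, ops (Finset.univ : Finset (Fin h × Fin g)).toList J.1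
            (fun Y => autFactor M Ω ξ Y * φ J.1 Y) W0) = 0 := by
          rw [Finset.sum_attach T (fun J => ops (Finset.univ : Finset (Fin h × Fin g)).toList J
            (fun Y => autFactor M Ω ξ Y * φ J Y) W0)]
          exact h1
        rw [Finset.sum_congr rfl h3, ← Finset.mul_sum] at h4
        exact (mul_eq_zero.1 h4).resolve_left (autFactor_ne_zero M Ω ξ W0)
      -- specialize to the scaling matrices
      have hvant : ∀ t : ℕ,
          (∑ J ∈ T.attach, ∑ i : ι J,
            (c0 ^ (∑ q, d J i q) * G J i W0) * (t : ℂ) ^ (wf (d J i))) = 0 := by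
        intro t
        set Yt : MatZ h g := Matrix.of fun k a => (t : ℤ) ^ (B ^ ((e (k, a) : ℕ))) with hYt
        set ξt : MatZ h g := M.adjugate * Yt with hxit
        have hMxi : M * ξt = (M.det : ℤ) • Yt := by
          rw [hxit, ← Matrix.mul_assoc, Matrix.mul_adjugate, Matrix.smul_mul, Matrix.one_mul]
        have hccp : ∀ p : Fin h × Fin g,
            autLin M ξt (Matrix.single p.1 p.2 1) =
              c0 * ((t : ℂ) ^ (B ^ ((e p : ℕ)))) := by
          intro p
          rw [autLin_single M hM.1 ξt p]
          have h7 : (M * ξt) p.1 p.2 = M.det * (t : ℤ) ^ (B ^ ((e p : ℕ))) := by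
            rw [hMxi]
            simp [Matrix.smul_apply, smul_eq_mul, hYt]
          rw [h7, hc0def]
          push_cast
          ring
        have hmon : ∀ dd : MIdx h g, monAL M ξt dd =
            c0 ^ (∑ q, dd q) * (t : ℂ) ^ (wf dd) := by
          intro dd
          rw [monAL]
          have h7 : ∀ q : Fin h × Fin g,
              autLin M ξt (Matrix.single q.1 q.2 1) ^ dd q =
                c0 ^ dd q * (t : ℂ) ^ (dd q * B ^ ((e q : ℕ))) := by
            intro q
            rw [hccp q, mul_pow, ← pow_mul, mul_comm (B ^ ((e q : ℕ))) (dd q)]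
          rw [Finset.prod_congr rfl fun q _ => h7 q, Finset.prod_mul_distrib,
            Finset.prod_pow_eq_pow_sum, Finset.prod_pow_eq_pow_sum]
        have h8 := hvan ξt
        have h9 : (∑ J ∈ T.attach, ∑ i : ι J, monAL M ξt (d J i) * G J i W0) =
            ∑ J ∈ T.attach, ∑ i : ι J,
              (c0 ^ (∑ q, d J i q) * G J i W0) * (t : ℂ) ^ (wf (d J i)) := by
          refine Finset.sum_congr rfl fun J _ => Finset.sum_congr rfl fun i _ => ?_
          rw [hmon (d J i)]
          ring
        rw [h9] at h8
        exact h8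
      -- turn the double sum into a sum over a sigma type and extract coefficients
      have hsig : ∀ t : ℕ,
          (∑ x : Σ J : {x // x ∈ T}, ι J,
            (c0 ^ (∑ q, d x.1 x.2 q) * G x.1 x.2 W0) * (t : ℂ) ^ (wf (d x.1 x.2))) = 0 := by
        intro t
        rw [← Finset.univ_sigma_univ, Finset.sum_sigma]
        rw [← Finset.univ_eq_attach] at hvant
        exact hvant t
      have hext := coeff_zero_of_nat_roots
        (fun x : Σ J : {x // x ∈ T}, ι J => c0 ^ (∑ q, d x.1 x.2 q) * G x.1 x.2 W0)
        (fun x => wf (d x.1 x.2)) hsig (wf K0)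
      set x0 : Σ J : {x // x ∈ T}, ι J := ⟨⟨K0, hK0T⟩, i0 ⟨K0, hK0T⟩⟩ with hx0
      have hd0 : d ⟨K0, hK0T⟩ (i0 ⟨K0, hK0T⟩) = K0 := by
        rw [hdi0 ⟨K0, hK0T⟩, hKL]
      have hfilter : Finset.univ.filter
          (fun x : Σ J : {x // x ∈ T}, ι J => wf (d x.1 x.2) = wf K0) = {x0} := by
        refine Finset.eq_singleton_iff_unique_mem.2 ⟨?_, ?_⟩
        · rw [Finset.mem_filter]
          exact ⟨Finset.mem_univ _, by rw [hx0, hd0]⟩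
        · rintro ⟨J, i⟩ hx
          rw [Finset.mem_filter] at hx
          have hdle' : d J i ≤ J.1 := by
            have := hdle J i
            rwa [hKL] at this
          have hdJi : d J i = K0 := by
            refine hwinj _ _ (fun q => ?_) (fun q => hBbound K0 hK0T q) hx.2
            exact lt_of_le_of_lt (hdle' q) (hBbound J.1 J.2 q)
          have hK0le : K0 ≤ J.1 := hdJi ▸ hdle'
          have hJK0 : J.1 = K0 := by
            by_contra hne
            exact hK0max J.1 J.2 (lt_of_le_of_ne hK0le (Ne.symm hne))
          have hJeq : J = ⟨K0, hK0T⟩ := Subtype.ext hJK0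
          subst hJeq
          have hieq : i = i0 ⟨K0, hK0T⟩ := by
            by_contra hne
            exact hdne ⟨K0, hK0T⟩ i hne (by rw [hKL]; exact hdJi)
          rw [hx0, hieq]
      rw [hfilter, Finset.sum_singleton, hx0] at hext
      have hGval : G ⟨K0, hK0T⟩ (i0 ⟨K0, hK0T⟩) W0 = φ K0 W0 := by
        rw [hGi0 ⟨K0, hK0T⟩]
      rw [hd0, hGval] at hext
      exact (mul_eq_zero.1 hext).resolve_left (pow_ne_zero _ hc0)
    -- conclude by induction on the erased set
    by_cases hKK0 : K = K0
    · rw [hKK0]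
      exact hcore
    · have hz2 : pdPow K0 (φ K0) = 0 := by
        rw [hcore]
        funext Y
        exact congrFun (pdPow_zero_fn K0) Y
      have h8 : pdPow K0 (φ K0) + ∑ J ∈ T.erase K0, pdPow J (φ J) = 0 := by
        rw [Finset.add_sum_erase T (fun J => pdPow J (φ J)) hK0T]
        exact hsumT
      rw [hz2, zero_add] at h8
      have hcard : (T.erase K0).card ≤ n := by
        have := Finset.card_erase_lt_of_mem hK0T
        omega
      exact IH (T.erase K0) hcard (fun J hJ => hφT J (Finset.mem_of_mem_erase hJ)) h8 K
        (Finset.mem_erase.2 ⟨hKK0, hK⟩)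
end
end
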